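/- For the 1d cut-cell model mesh with one small cell of length αh between uniform cells of length h, the mixed MUSCL–Trapezoidal scheme with forward-difference slopes has a one-step error on the cut cell 0 of order O(h³), and on the transition cells ±1 the one-step error equals ∓(λ/4)(λ² - (1-β) + (α²-1)/(12β)) h² s_xx(t^n, x_{∓1}) + O(h³), where β = (1+α)/2. -/

import Mathlib

open Filter Asymptotics Topology intervalIntegral

open scoped ContDiff

set_option maxHeartbeats 4000000

private lemma memUIcc_abs_le {x y : ℝ} (hy : y ∈ Set.uIcc (0:ℝ) x) : |y| ≤ |x| := by
  rcases Set.mem_uIcc.mp hy with ⟨h1, h2⟩ | ⟨h1, h2⟩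
  · rw [abs_of_nonneg h1]; exact h2.trans (le_abs_self x)
  · rw [abs_of_nonpos h2]; calc -y ≤ -x := neg_le_neg h1
      _ ≤ |x| := neg_le_abs x

private lemma stepO {f : ℝ → ℝ} (hf : Differentiable ℝ f) (h0 : f 0 = 0) {n : ℕ}
    (hd : (deriv f) =O[𝓝 (0:ℝ)] fun h => h ^ n) :
    f =O[𝓝 (0:ℝ)] fun h => h ^ (n + 1) := by
  obtain ⟨c, hcpos, hc⟩ := hd.exists_pos
  rw [isBigOWith_iff] at hc
  obtain ⟨ε, εpos, hball⟩ := Metric.eventually_nhds_iff.mp hc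
  rw [isBigO_iff]
  refine ⟨c, Metric.eventually_nhds_iff.mpr ⟨ε, εpos, fun {x} hx => ?_⟩⟩
  have hxnorm : |x| < ε := by simpa [Real.dist_eq] using hx
  have hbd : ∀ y ∈ Set.uIcc (0:ℝ) x, ‖deriv f y‖ ≤ c * |x| ^ n := by
    intro y hy
    have h1 : |y| ≤ |x| := memUIcc_abs_le hy
    have h2 : ‖deriv f y‖ ≤ c * ‖y ^ n‖ := hball (by simpa [Real.dist_eq] using h1.trans_lt hxnorm)
    refine h2.trans ?_
    have h3 : ‖y ^ n‖ ≤ |x| ^ n := by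
      rw [norm_pow]
      exact pow_le_pow_left₀ (abs_nonneg y) h1 n
    exact mul_le_mul_of_nonneg_left h3 hcpos.le
  have key := Convex.norm_image_sub_le_of_norm_deriv_le
    (fun y _ => hf y) hbd (convex_uIcc (0:ℝ) x)
    Set.left_mem_uIcc Set.right_mem_uIcc
  rw [h0, sub_zero, sub_zero] at key
  calc ‖f x‖ ≤ c * |x| ^ n * ‖x‖ := key
    _ = c * ‖x ^ (n+1)‖ := by
        rw [norm_pow, pow_succ, Real.norm_eq_abs]; ring

private lemma infty_ge_one : (1 : WithTop ℕ∞) ≤ ∞ := by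
  exact_mod_cast (le_top : (1:ℕ∞) ≤ ⊤)

private lemma hasDerivAt_comp_affine {f : ℝ → ℝ} (hf : Differentiable ℝ f) (x0 r h : ℝ) :
    HasDerivAt (fun h : ℝ => f (x0 + r * h)) (deriv f (x0 + r * h) * r) h := by
  have hi : HasDerivAt (fun h : ℝ => x0 + r * h) r h := by
    simpa using ((hasDerivAt_id h).const_mul r).const_add x0
  simpa [Function.comp_def] using ((hf _).hasDerivAt.comp h hi)

private lemma taylor1 {f : ℝ → ℝ} (hf : ContDiff ℝ ∞ f) (x0 r : ℝ) :
    (fun h : ℝ => f (x0 + r * h) - f x0) =O[𝓝 (0:ℝ)] fun h : ℝ => h ^ 1 := by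
  have hd : DifferentiableAt ℝ (fun h : ℝ => f (x0 + r * h)) 0 :=
    (hasDerivAt_comp_affine (hf.differentiable (by simp)) x0 r 0).differentiableAt
  simpa using hd.isBigO_sub

private lemma taylor2 {f : ℝ → ℝ} (hf : ContDiff ℝ ∞ f) (x0 r : ℝ) :
    (fun h : ℝ => f (x0 + r * h) - f x0 - deriv f x0 * (r * h))
      =O[𝓝 (0:ℝ)] fun h : ℝ => h ^ 2 := by
  have hdf : Differentiable ℝ f := hf.differentiable (by simp)
  have hf' : ContDiff ℝ ∞ (deriv f) := (contDiff_infty_iff_deriv.mp hf).2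
  have hF : ∀ h : ℝ, HasDerivAt
      (fun h : ℝ => f (x0 + r * h) - f x0 - deriv f x0 * (r * h))
      ((deriv f (x0 + r * h) - deriv f x0) * r) h := by
    intro h
    have h1 := hasDerivAt_comp_affine hdf x0 r h
    have h2 : HasDerivAt (fun h : ℝ => deriv f x0 * (r * h)) (deriv f x0 * r) h := by
      simpa [mul_assoc] using (hasDerivAt_id h).const_mul (deriv f x0 * r)
    have h3 := (h1.sub_const (f x0)).sub h2
    exact h3.congr_deriv (by ring)
  have hder : deriv (fun h : ℝ => f (x0 + r * h) - f x0 - deriv f x0 * (r * h))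
      = fun h : ℝ => (deriv f (x0 + r * h) - deriv f x0) * r :=
    funext fun h => (hF h).deriv
  refine stepO (fun h => (hF h).differentiableAt) (by simp) (n := 1) ?_
  rw [hder]
  simpa [mul_comm] using (taylor1 hf' x0 r).const_mul_left r

private lemma taylor3 {f : ℝ → ℝ} (hf : ContDiff ℝ ∞ f) (x0 r : ℝ) :
    (fun h : ℝ => f (x0 + r * h) - f x0 - deriv f x0 * (r * h)
      - deriv (deriv f) x0 * (r * h) ^ 2 / 2)
      =O[𝓝 (0:ℝ)] fun h : ℝ => h ^ 3 := by
  have hdf : Differentiable ℝ f := hf.differentiable (by simp)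
  have hf' : ContDiff ℝ ∞ (deriv f) := (contDiff_infty_iff_deriv.mp hf).2
  have hF : ∀ h : ℝ, HasDerivAt
      (fun h : ℝ => f (x0 + r * h) - f x0 - deriv f x0 * (r * h)
        - deriv (deriv f) x0 * (r * h) ^ 2 / 2)
      ((deriv f (x0 + r * h) - deriv f x0 - deriv (deriv f) x0 * (r * h)) * r) h := by
    intro h
    have h1 := hasDerivAt_comp_affine hdf x0 r h
    have h2 : HasDerivAt (fun h : ℝ => deriv f x0 * (r * h)) (deriv f x0 * r) h := by
      simpa [mul_assoc] using (hasDerivAt_id h).const_mul (deriv f x0 * r)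
    have hb : HasDerivAt (fun h : ℝ => r * h) r h := by
      simpa using (hasDerivAt_id h).const_mul r
    have h4 : HasDerivAt (fun h : ℝ => deriv (deriv f) x0 * (r * h) ^ 2 / 2)
        (deriv (deriv f) x0 * (2 * (r * h) ^ 1 * r) / 2) h :=
      ((hb.pow 2).const_mul (deriv (deriv f) x0)).div_const 2
    have h5 := ((h1.sub_const (f x0)).sub h2).sub h4
    exact h5.congr_deriv (by ring)
  have hder : deriv (fun h : ℝ => f (x0 + r * h) - f x0 - deriv f x0 * (r * h)
        - deriv (deriv f) x0 * (r * h) ^ 2 / 2)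
      = fun h : ℝ => (deriv f (x0 + r * h) - deriv f x0 - deriv (deriv f) x0 * (r * h)) * r :=
    funext fun h => (hF h).deriv
  refine stepO (fun h => (hF h).differentiableAt) (by simp) (n := 2) ?_
  rw [hder]
  simpa [mul_comm] using (taylor2 hf' x0 r).const_mul_left r

private lemma taylor4 {f : ℝ → ℝ} (hf : ContDiff ℝ ∞ f) (x0 r : ℝ) :
    (fun h : ℝ => f (x0 + r * h) - f x0 - deriv f x0 * (r * h)
      - deriv (deriv f) x0 * (r * h) ^ 2 / 2
      - deriv (deriv (deriv f)) x0 * (r * h) ^ 3 / 6)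
      =O[𝓝 (0:ℝ)] fun h : ℝ => h ^ 4 := by
  have hdf : Differentiable ℝ f := hf.differentiable (by simp)
  have hf' : ContDiff ℝ ∞ (deriv f) := (contDiff_infty_iff_deriv.mp hf).2
  have hF : ∀ h : ℝ, HasDerivAt
      (fun h : ℝ => f (x0 + r * h) - f x0 - deriv f x0 * (r * h)
        - deriv (deriv f) x0 * (r * h) ^ 2 / 2
        - deriv (deriv (deriv f)) x0 * (r * h) ^ 3 / 6)
      ((deriv f (x0 + r * h) - deriv f x0 - deriv (deriv f) x0 * (r * h)
        - deriv (deriv (deriv f)) x0 * (r * h) ^ 2 / 2) * r) h := by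
    intro h
    have h1 := hasDerivAt_comp_affine hdf x0 r h
    have h2 : HasDerivAt (fun h : ℝ => deriv f x0 * (r * h)) (deriv f x0 * r) h := by
      simpa [mul_assoc] using (hasDerivAt_id h).const_mul (deriv f x0 * r)
    have hb : HasDerivAt (fun h : ℝ => r * h) r h := by
      simpa using (hasDerivAt_id h).const_mul r
    have h4 : HasDerivAt (fun h : ℝ => deriv (deriv f) x0 * (r * h) ^ 2 / 2)
        (deriv (deriv f) x0 * (2 * (r * h) ^ 1 * r) / 2) h :=
      ((hb.pow 2).const_mul (deriv (deriv f) x0)).div_const 2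
    have h6 : HasDerivAt (fun h : ℝ => deriv (deriv (deriv f)) x0 * (r * h) ^ 3 / 6)
        (deriv (deriv (deriv f)) x0 * (3 * (r * h) ^ 2 * r) / 6) h :=
      ((hb.pow 3).const_mul (deriv (deriv (deriv f)) x0)).div_const 6
    have h5 := (((h1.sub_const (f x0)).sub h2).sub h4).sub h6
    exact h5.congr_deriv (by ring)
  have hder : deriv (fun h : ℝ => f (x0 + r * h) - f x0 - deriv f x0 * (r * h)
        - deriv (deriv f) x0 * (r * h) ^ 2 / 2
        - deriv (deriv (deriv f)) x0 * (r * h) ^ 3 / 6)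
      = fun h : ℝ => (deriv f (x0 + r * h) - deriv f x0 - deriv (deriv f) x0 * (r * h)
        - deriv (deriv (deriv f)) x0 * (r * h) ^ 2 / 2) * r :=
    funext fun h => (hF h).deriv
  refine stepO (fun h => (hF h).differentiableAt) (by simp) (n := 3) ?_
  rw [hder]
  simpa [mul_comm] using (taylor3 hf' x0 r).const_mul_left r

/-- Center of cell `i` of the 1d cut-cell model mesh: uniform cells of width `h`
except the cut cell `0` of width `αh`; with `β = (1+α)/2` the distance between
the centers of cells `0` and `±1` is `βh`. -/
noncomputable def ccCenter (x0 α h : ℝ) (i : ℤ) : ℝ :=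
  if i = 0 then x0
  else if 0 < i then x0 + ((1+α)/2 + ((i : ℝ) - 1)) * h
  else x0 - ((1+α)/2 + (-(i : ℝ) - 1)) * h

/-- Width of cell `i` of the cut-cell model mesh. -/
noncomputable def ccWidth (α h : ℝ) (i : ℤ) : ℝ := if i = 0 then α * h else h

/-- One-step error on cell `i` of the mixed MUSCL–Trapezoidal scheme on the
cut-cell model mesh, applied to the exact cell averages of `s` at `t^n` and
`t^{n+1} = t^n + Δt`, `Δt = λh/u`: trapezoidal-in-time fluxes with linear
reconstruction at edges `-1/2` and `1/2`, MUSCL with forward-difference slopes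
elsewhere. -/
noncomputable def ccOneStepError (s : ℝ → ℝ → ℝ) (u α lam tn x0 h : ℝ) (i : ℤ) : ℝ :=
  let Δt := lam * h / u
  let tnp := tn + Δt
  let c := ccCenter x0 α h
  let wd := ccWidth α h
  let A := fun (t : ℝ) (j : ℤ) =>
    (1 / wd j) * ∫ y in (c j - wd j / 2)..(c j + wd j / 2), s t y
  let σ := fun (t : ℝ) (j : ℤ) => (A t (j+1) - A t j) / (c (j+1) - c j)
  let FM := fun (j : ℤ) => u * (A tn j + (1 - lam) * σ tn j * (h/2))
  let FT := fun (j : ℤ) =>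
    (u/2) * (A tn j + σ tn j * (wd j / 2) + A tnp j + σ tnp j * (wd j / 2))
  let flux := fun (j : ℤ) => if j = -1 ∨ j = 0 then FT j else FM j
  A tn i - (Δt / wd i) * (flux i - flux (i-1)) - A tnp i

/-- For the 1d cut-cell model mesh with one small cell of length `αh`,
the mixed MUSCL–Trapezoidal scheme with forward-difference slopes has a one-step
error of order `O(h³)` on the cut cell `0`, and on the transition cells `∓1` the
one-step error equals
`∓(λ/4)(λ² - (1-β) + (α²-1)/(12β)) h² s_xx(t^n, x_{∓1}) + O(h³)`,
with `β = (1+α)/2`. -/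
theorem cut_cell_one_step_errors
    (s : ℝ → ℝ → ℝ) (u α lam tn x0 : ℝ) (hu : 0 < u)
    (hα : α ∈ Set.Ioc (0:ℝ) 1) (hlam : lam ∈ Set.Ioc (0:ℝ) 1)
    (hs : ContDiff ℝ (⊤ : ℕ∞) (Function.uncurry s))
    (hpde : ∀ t x : ℝ, deriv (fun τ => s τ x) t + u * deriv (fun y => s t y) x = 0) :
    ((fun h : ℝ => ccOneStepError s u α lam tn x0 h 0)
        =O[𝓝[>] (0:ℝ)] (fun h => h^3))
    ∧ ((fun h : ℝ => ccOneStepError s u α lam tn x0 h (-1)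
        + (lam/4) * (lam^2 - (1 - (1+α)/2) + (α^2 - 1)/(12 * ((1+α)/2)))
          * h^2 * iteratedDeriv 2 (s tn) (ccCenter x0 α h (-1)))
        =O[𝓝[>] (0:ℝ)] (fun h => h^3))
    ∧ ((fun h : ℝ => ccOneStepError s u α lam tn x0 h 1
        - (lam/4) * (lam^2 - (1 - (1+α)/2) + (α^2 - 1)/(12 * ((1+α)/2)))
          * h^2 * iteratedDeriv 2 (s tn) (ccCenter x0 α h 1))
        =O[𝓝[>] (0:ℝ)] (fun h => h^3)) := by
  have husm : ContDiff ℝ ∞ (Function.uncurry s) := hs.of_le (by simp)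
  have hd : Differentiable ℝ (Function.uncurry s) :=
    husm.differentiable (by simp)
  -- traveling wave structure
  have key : ∀ t y : ℝ, s t y = s tn (y - u * (t - tn)) := by
    intro t y
    have hz : ∀ z : ℝ, s t (z + u * t) = s tn (z + u * tn) := by
      intro z
      have hdiff : Differentiable ℝ (fun τ : ℝ => s τ (z + u * τ)) := by
        intro τ
        have hγ : DifferentiableAt ℝ (fun τ : ℝ => (τ, z + u * τ)) τ :=
          differentiableAt_id.prodMk ((differentiableAt_id.const_mul u).const_add z)
        exact (hd (τ, z + u * τ)).comp τ hγ
      have hzero : ∀ τ : ℝ, deriv (fun τ : ℝ => s τ (z + u * τ)) τ = 0 := by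
        intro τ
        set p := (τ, z + u * τ) with hp
        have hF : HasFDerivAt (Function.uncurry s) (fderiv ℝ (Function.uncurry s) p) p :=
          (hd p).hasFDerivAt
        have hγ : HasDerivAt (fun τ : ℝ => (τ, z + u * τ)) ((1 : ℝ), u) τ := by
          refine (hasDerivAt_id τ).prodMk ?_
          simpa using ((hasDerivAt_id τ).const_mul u).const_add z
        have hcomp : HasDerivAt (fun τ : ℝ => s τ (z + u * τ))
            (fderiv ℝ (Function.uncurry s) p (1, u)) τ := (hF.comp_hasDerivAt τ hγ :)
        have ht : HasDerivAt (fun τ' : ℝ => s τ' (z + u * τ))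
            (fderiv ℝ (Function.uncurry s) p (1, 0)) τ :=
          (hF.comp_hasDerivAt τ ((hasDerivAt_id τ).prodMk (hasDerivAt_const τ (z + u * τ))) :)
        have hx : HasDerivAt (fun y : ℝ => s τ y)
            (fderiv ℝ (Function.uncurry s) p (0, 1)) (z + u * τ) :=
          (hF.comp_hasDerivAt (z + u * τ)
            ((hasDerivAt_const (z + u * τ) τ).prodMk (hasDerivAt_id (z + u * τ))) :)
        have hsplit : fderiv ℝ (Function.uncurry s) p (1, u)
            = fderiv ℝ (Function.uncurry s) p (1, 0)
              + u * fderiv ℝ (Function.uncurry s) p (0, 1) := by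
          have h1 : ((1:ℝ), u) = ((1:ℝ), (0:ℝ)) + u • ((0:ℝ), (1:ℝ)) := by
            simp [Prod.ext_iff]
          rw [h1, map_add, map_smul]
          simp [smul_eq_mul]
        rw [hcomp.deriv, hsplit, ← ht.deriv, ← hx.deriv]
        exact hpde τ (z + u * τ)
      exact is_const_of_deriv_eq_zero hdiff hzero t tn
    have h0 := hz (y - u * t)
    have h1 : y - u * t + u * t = y := by ring
    have h2 : y - u * t + u * tn = y - u * (t - tn) := by ring
    rwa [h1, h2] at h0
  have hune : u ≠ 0 := ne_of_gt hu
  have hαne : α ≠ 0 := ne_of_gt hα.1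
  have h1α : (1:ℝ) + α ≠ 0 := by have := hα.1; positivity
  -- smoothness of the profile and its primitive
  have hg : ContDiff ℝ ∞ (s tn) := by
    have h1 : ContDiff ℝ ∞ (fun y : ℝ => Function.uncurry s (tn, y)) :=
      husm.comp (contDiff_const.prodMk contDiff_id)
    exact h1
  have hgc : Continuous (s tn) := hg.continuous
  set G : ℝ → ℝ := fun x => ∫ y in x0..x, s tn y with hGdef
  have hGd : ∀ x : ℝ, HasDerivAt G (s tn x) x := fun x =>
    (hgc.integral_hasStrictDerivAt x0 x).hasDerivAt
  have hderivG : deriv G = s tn := funext fun x => (hGd x).deriv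
  have hG : ContDiff ℝ ∞ G :=
    contDiff_infty_iff_deriv.mpr ⟨fun x => (hGd x).differentiableAt, hderivG ▸ hg⟩
  have hint : ∀ a b : ℝ, (∫ y in a..b, s tn y) = G b - G a := by
    intro a b
    exact (integral_interval_sub_left (hgc.intervalIntegrable x0 b)
      (hgc.intervalIntegrable x0 a)).symm
  have hAp : ∀ h a b : ℝ, (∫ y in a..b, s (tn + lam * h / u) y)
      = G (b - lam * h) - G (a - lam * h) := by
    intro h a b
    have h1 : ∀ y : ℝ, s (tn + lam * h / u) y = s tn (y - lam * h) := by
      intro y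
      rw [key (tn + lam * h / u) y]
      congr 1
      field_simp
      ring
    rw [intervalIntegral.integral_congr (g := fun y => s tn (y - lam * h))
      (fun y _ => h1 y)]
    rw [intervalIntegral.integral_comp_sub_right (fun y => s tn y) (lam * h)]
    exact hint _ _
  have hiter2 : ∀ f : ℝ → ℝ, iteratedDeriv 2 f = deriv (deriv f) := by
    intro f
    rw [show (2:ℕ) = 1 + 1 from rfl, iteratedDeriv_succ', iteratedDeriv_one]
  have hd3iter : deriv (deriv (deriv G)) x0 = iteratedDeriv 2 (s tn) x0 := by
    rw [hderivG, hiter2]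
  have hψ : ∀ b : ℝ, (fun h : ℝ => h ^ 3 *
      (iteratedDeriv 2 (s tn) (x0 + b * h) - iteratedDeriv 2 (s tn) x0))
      =O[𝓝 (0:ℝ)] fun h : ℝ => h ^ 4 := by
    intro b
    have hψsm : ContDiff ℝ ∞ (iteratedDeriv 2 (s tn)) := by
      rw [hiter2]
      exact (contDiff_infty_iff_deriv.mp (contDiff_infty_iff_deriv.mp hg).2).2
    have hψd : DifferentiableAt ℝ (fun h : ℝ => iteratedDeriv 2 (s tn) (x0 + b * h)) 0 := by
      have hout : DifferentiableAt ℝ (iteratedDeriv 2 (s tn)) (x0 + b * 0) :=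
        (hψsm.differentiable (by simp)) _
      have hin : DifferentiableAt ℝ (fun h : ℝ => x0 + b * h) (0:ℝ) :=
        (differentiableAt_id.const_mul b).const_add x0
      simpa [Function.comp_def] using hout.comp (0:ℝ) hin
    have h1 : (fun h : ℝ => iteratedDeriv 2 (s tn) (x0 + b * h)
        - iteratedDeriv 2 (s tn) x0) =O[𝓝 (0:ℝ)] fun h : ℝ => h := by
      simpa using hψd.isBigO_sub
    have h2 := (isBigO_refl (fun h : ℝ => h ^ 3) (𝓝 (0:ℝ))).mul h1
    have h3 : (fun h : ℝ => h ^ 3 * h) = fun h : ℝ => h ^ 4 := by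
      funext h; ring
    rwa [h3] at h2
  have glue : ∀ F M : ℝ → ℝ, (M =O[𝓝 (0:ℝ)] fun h => h ^ 4) →
      (∀ h : ℝ, 0 < h → F h = M h / h) → F =O[𝓝[>] (0:ℝ)] fun h => h ^ 3 := by
    intro F M hM heq
    have h1 : F =ᶠ[𝓝[>] (0:ℝ)] fun h => M h / h := by
      filter_upwards [self_mem_nhdsWithin] with h hh using heq h hh
    refine h1.trans_isBigO ?_
    have h2 : (fun h : ℝ => M h / h) =O[𝓝[>] (0:ℝ)] fun h : ℝ => h ^ 4 / h := by
      simp only [div_eq_mul_inv]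
      exact (hM.mono nhdsWithin_le_nhds).mul (isBigO_refl _ _)
    refine h2.trans (IsBigO.of_bound 1 ?_)
    filter_upwards [self_mem_nhdsWithin] with h hh
    have h3 : h ^ 4 / h = h ^ 3 := by
      field_simp [ne_of_gt (α := ℝ) hh]
    rw [h3]
    simp
  set d1 := deriv G x0 with hd1
  set d2 := deriv (deriv G) x0 with hd2
  set d3 := deriv (deriv (deriv G)) x0 with hd3'
  set R : ℝ → ℝ → ℝ := fun r h => G (x0 + r * h) - G x0 - d1 * (r * h)
      - d2 * (r * h) ^ 2 / 2 - d3 * (r * h) ^ 3 / 6 with hRdef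
  have hRO : ∀ r : ℝ, (fun h : ℝ => R r h) =O[𝓝 (0:ℝ)] fun h : ℝ => h ^ 4 := by
    intro r
    rw [hRdef]
    exact taylor4 hG x0 r
  refine ⟨?_, ?_, ?_⟩
  · -- cut cell 0
    have key0 : ∀ h : ℝ, 0 < h → ccOneStepError s u α lam tn x0 h 0 =
        ((1/α) * (R (α/2) h - R (-α/2) h - R (α/2 - lam) h + R (-α/2 - lam) h)
         - (lam/(2*(1+α))) * (R (1+α/2) h - R (α/2) h + R (1+α/2-lam) h - R (α/2-lam) h
             - R (-α/2) h + R (-1-α/2) h - R (-α/2-lam) h + R (-1-α/2-lam) h)) / h := by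
      intro h hh
      have hhne : h ≠ 0 := ne_of_gt hh
      simp only [ccOneStepError, ccCenter, ccWidth]
      norm_num
      simp only [hint, hAp, hRdef]
      field_simp
      ring
    refine glue _ _ ?_ key0
    exact (((((hRO _).sub (hRO _)).sub (hRO _)).add (hRO _)).const_mul_left (1/α)).sub
      (((((((((hRO _).sub (hRO _)).add (hRO _)).sub (hRO _)).sub (hRO _)).add
        (hRO _)).sub (hRO _)).add (hRO _)).const_mul_left (lam/(2*(1+α))))
  · -- transition cell -1
    have keym1 : ∀ h : ℝ, 0 < h → ccOneStepError s u α lam tn x0 h (-1)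
        + (lam/4) * (lam^2 - (1 - (1+α)/2) + (α^2 - 1)/(12 * ((1+α)/2)))
          * h^2 * iteratedDeriv 2 (s tn) (ccCenter x0 α h (-1)) =
        ((R (-α/2) h - R (-1-α/2) h) - (R (-α/2-lam) h - R (-1-α/2-lam) h)
          - (lam*α/(2*(1+α))) * ((R (-α/2) h - R (-1-α/2) h)
              + (R (-α/2-lam) h - R (-1-α/2-lam) h))
          - (lam/(2*(1+α))) * ((1/α) * (R (α/2) h - R (-α/2) h)
              + (1/α) * (R (α/2-lam) h - R (-α/2-lam) h))
          + (lam*(1+lam)/2) * (R (-1-α/2) h - R (-2-α/2) h)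
          + (lam*(1-lam)/2) * (R (-α/2) h - R (-1-α/2) h)
          + ((lam/4) * (lam^2 - (1 - (1+α)/2) + (α^2 - 1)/(12 * ((1+α)/2))))
              * (h^3 * (iteratedDeriv 2 (s tn) (x0 + (-((1+α)/2)) * h)
                  - iteratedDeriv 2 (s tn) x0))) / h := by
      intro h hh
      have hhne : h ≠ 0 := ne_of_gt hh
      have hcc : ccCenter x0 α h (-1) = x0 + (-((1+α)/2)) * h := by
        simp [ccCenter]
        ring
      rw [hcc]
      have hψ0 : iteratedDeriv 2 (s tn) x0 = d3 := hd3iter.symm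
      rw [hψ0]
      simp only [ccOneStepError, ccCenter, ccWidth]
      norm_num
      simp only [hint, hAp, hRdef]
      rw [show (((1 + α) / 2 + 1) * h - (1 + α) / 2 * h) = h from by ring]
      rw [eq_div_iff hhne]
      field_simp
      ring
    refine glue _ _ ?_ keym1
    have t1 := (hRO (-α/2)).sub (hRO (-1-α/2))
    have t2 := (hRO (-α/2-lam)).sub (hRO (-1-α/2-lam))
    have t3 := (t1.add t2).const_mul_left (lam*α/(2*(1+α)))
    have t4a := ((hRO (α/2)).sub (hRO (-α/2))).const_mul_left (1/α)
    have t4b := ((hRO (α/2-lam)).sub (hRO (-α/2-lam))).const_mul_left (1/α)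
    have t4 := (t4a.add t4b).const_mul_left (lam/(2*(1+α)))
    have t5 := ((hRO (-1-α/2)).sub (hRO (-2-α/2))).const_mul_left (lam*(1+lam)/2)
    have t6 := ((hRO (-α/2)).sub (hRO (-1-α/2))).const_mul_left (lam*(1-lam)/2)
    have t7 := (hψ (-((1+α)/2))).const_mul_left
      ((lam/4) * (lam^2 - (1 - (1+α)/2) + (α^2 - 1)/(12 * ((1+α)/2))))
    exact ((((((t1.sub t2).sub t3).sub t4).add t5).add t6).add t7)
  · -- transition cell 1
    have keyp1 : ∀ h : ℝ, 0 < h → ccOneStepError s u α lam tn x0 h 1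
        - (lam/4) * (lam^2 - (1 - (1+α)/2) + (α^2 - 1)/(12 * ((1+α)/2)))
          * h^2 * iteratedDeriv 2 (s tn) (ccCenter x0 α h 1) =
        ((R (1+α/2) h - R (α/2) h) - (R (1+α/2-lam) h - R (α/2-lam) h)
          - (lam*(1+lam)/2) * (R (1+α/2) h - R (α/2) h)
          - (lam*(1-lam)/2) * (R (2+α/2) h - R (1+α/2) h)
          + (lam/(2*(1+α))) * ((1/α) * (R (α/2) h - R (-α/2) h)
              + (1/α) * (R (α/2-lam) h - R (-α/2-lam) h))
          + (lam*α/(2*(1+α))) * ((R (1+α/2) h - R (α/2) h)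
              + (R (1+α/2-lam) h - R (α/2-lam) h))
          - ((lam/4) * (lam^2 - (1 - (1+α)/2) + (α^2 - 1)/(12 * ((1+α)/2))))
              * (h^3 * (iteratedDeriv 2 (s tn) (x0 + ((1+α)/2) * h)
                  - iteratedDeriv 2 (s tn) x0))) / h := by
      intro h hh
      have hhne : h ≠ 0 := ne_of_gt hh
      have hcc : ccCenter x0 α h 1 = x0 + ((1+α)/2) * h := by
        norm_num [ccCenter]
      rw [hcc]
      have hψ0 : iteratedDeriv 2 (s tn) x0 = d3 := hd3iter.symm
      rw [hψ0]
      simp only [ccOneStepError, ccCenter, ccWidth]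
      norm_num
      simp only [hint, hAp, hRdef]
      rw [show (((1 + α) / 2 + 1) * h - (1 + α) / 2 * h) = h from by ring]
      rw [eq_div_iff hhne]
      field_simp
      ring
    refine glue _ _ ?_ keyp1
    have t1 := (hRO (1+α/2)).sub (hRO (α/2))
    have t2 := (hRO (1+α/2-lam)).sub (hRO (α/2-lam))
    have t3 := ((hRO (1+α/2)).sub (hRO (α/2))).const_mul_left (lam*(1+lam)/2)
    have t4 := ((hRO (2+α/2)).sub (hRO (1+α/2))).const_mul_left (lam*(1-lam)/2)
    have t5a := ((hRO (α/2)).sub (hRO (-α/2))).const_mul_left (1/α)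
    have t5b := ((hRO (α/2-lam)).sub (hRO (-α/2-lam))).const_mul_left (1/α)
    have t5 := (t5a.add t5b).const_mul_left (lam/(2*(1+α)))
    have t6 := (t1.add t2).const_mul_left (lam*α/(2*(1+α)))
    have t7 := (hψ ((1+α)/2)).const_mul_left
      ((lam/4) * (lam^2 - (1 - (1+α)/2) + (α^2 - 1)/(12 * ((1+α)/2))))
    exact ((((((t1.sub t2).sub t3).sub t4).add t5).add t6).sub t7)
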